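/- arXiv:2603.24788 — 3 statements merged into one kernel-verified Lean document; each statement's English description precedes it below -/
import Mathlib

section
/- Let F be a field, u ∈ F[X] non-constant, and define deg_u(f) := max_i deg(c_i) where f = Σ_i c_i u^i is the unique u-adic expansion with deg(c_i) < deg(u) (with deg(0) = -∞). Then for all f, g ∈ F[X], deg_u(f·g) ≤ deg_u(f) + deg_u(g). -/
/-- The `u`-base degree of an expansion `c` (a finitely supported family of
coefficient polynomials): the maximum of the degrees of the coefficients,
with `deg 0 = ⊥` (i.e. `-∞`). -/
noncomputable def baseDeg {F : Type*} [Field F] (c : ℕ →₀ Polynomial F) :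
    WithBot ℕ :=
  c.support.sup fun i => (c i).degree

open Polynomial

private lemma expand_zero_unique {F : Type*} [Field F] {u : Polynomial F} (hu : u ≠ 0)
    (c : ℕ →₀ Polynomial F) (hc : ∀ i, (c i).degree < u.degree)
    (h0 : (c.sum fun i ci => ci * u ^ i) = 0) : c = 0 := by
  by_contra hne
  have hsupp : c.support.Nonempty := Finsupp.support_nonempty_iff.2 hne
  set n := c.support.min' hsupp with hn
  have hnmem : n ∈ c.support := c.support.min'_mem hsupp
  have hcn : c n ≠ 0 := Finsupp.mem_support_iff.1 hnmem
  have hsplit : c n * u ^ n + ∑ i ∈ c.support.erase n, c i * u ^ i =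
      c.sum fun i ci => ci * u ^ i :=
    Finset.add_sum_erase _ (fun i => c i * u ^ i) hnmem
  have hdvd : u ^ (n + 1) ∣ ∑ i ∈ c.support.erase n, c i * u ^ i := by
    refine Finset.dvd_sum fun i hi => ?_
    have hin : n < i := by
      rcases Finset.mem_erase.1 hi with ⟨hne', hmem⟩
      exact lt_of_le_of_ne (Finset.min'_le _ _ hmem) (Ne.symm hne')
    exact Dvd.dvd.mul_left (pow_dvd_pow u hin) _
  have hdvd2 : u ^ (n + 1) ∣ c n * u ^ n := by
    have : c n * u ^ n = -(∑ i ∈ c.support.erase n, c i * u ^ i) := by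
      rw [h0] at hsplit
      linear_combination hsplit
    rw [this]
    exact hdvd.neg_right
  have hdvd3 : u ∣ c n := by
    have h1 : u ^ n * u ∣ u ^ n * c n := by
      rw [← pow_succ]
      rw [mul_comm (u ^ n) (c n)]
      exact hdvd2
    exact (mul_dvd_mul_iff_left (pow_ne_zero n hu)).1 h1
  have := Polynomial.degree_le_of_dvd hdvd3 hcn
  exact absurd (hc n) (not_lt.2 this)

private
lemma expand_unique {F : Type*} [Field F] {u : Polynomial F} (hu : u ≠ 0)
    (c c' : ℕ →₀ Polynomial F) (hc : ∀ i, (c i).degree < u.degree)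
    (hc' : ∀ i, (c' i).degree < u.degree)
    (h : (c.sum fun i ci => ci * u ^ i) = c'.sum fun i ci => ci * u ^ i) : c = c' := by
  have key : c - c' = 0 := by
    apply expand_zero_unique hu
    · intro i
      rw [Finsupp.sub_apply]
      exact lt_of_le_of_lt (degree_sub_le _ _) (max_lt (hc i) (hc' i))
    · have hs := Finsupp.sum_sub_index (f := c) (g := c') (h := fun i ci => ci * u ^ i)
        (fun a b₁ b₂ => sub_mul b₁ b₂ (u ^ a))
      rw [hs, h, sub_self]
  exact sub_eq_zero.1 key

private lemma carry {F : Type*} [Field F] {u : Polynomial F} (hu : 1 ≤ u.degree) (M : ℕ)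
    (h : ℕ →₀ Polynomial F) (hh : ∀ k, (h k).degree ≤ (M : WithBot ℕ)) :
    ∃ c : ℕ →₀ Polynomial F, (∀ i, (c i).degree < u.degree) ∧
      (∀ i, (c i).degree ≤ (M : WithBot ℕ)) ∧
      ((c.sum fun i ci => ci * u ^ i) = h.sum fun i ci => ci * u ^ i) := by
  have hu0 : u ≠ 0 := by
    intro h'; rw [h', degree_zero] at hu; exact absurd hu (by simp)
  have hdeg : u.degree = (u.natDegree : WithBot ℕ) := degree_eq_natDegree hu0
  set d := u.natDegree with hd
  have hd1 : 1 ≤ d := by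
    rw [hdeg] at hu; exact_mod_cast hu
  induction M using Nat.strong_induction_on generalizing h with
  | _ M ih =>
  by_cases hMd : M < d
  · exact ⟨h, fun k => lt_of_le_of_lt (hh k) (by rw [hdeg]; exact_mod_cast hMd),
      hh, rfl⟩
  push_neg at hMd
  -- carry step
  set r : ℕ →₀ Polynomial F := h.mapRange (· % u) (by simp) with hr_def
  set q : ℕ →₀ Polynomial F := h.mapRange (· / u) (by simp) with hq_def
  set qs : ℕ →₀ Polynomial F := q.embDomain ⟨Nat.succ, Nat.succ_injective⟩ with hqs_def
  have hrk : ∀ k, (r k).degree < u.degree := by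
    intro k
    rw [hr_def, Finsupp.mapRange_apply]
    exact EuclideanDomain.mod_lt _ hu0
  have hqk : ∀ k, (q k).degree ≤ ((M - d : ℕ) : WithBot ℕ) := by
    intro k
    rw [hq_def, Finsupp.mapRange_apply]
    by_cases hk : u.degree ≤ (h k).degree
    · have := degree_add_div hu0 hk
      rcases eq_or_ne (h k / u) 0 with h0 | h0
      · rw [h0, degree_zero]; exact bot_le
      · rw [degree_eq_natDegree h0]
        have hM : u.degree + ((h k / u).natDegree : WithBot ℕ) ≤ (M : WithBot ℕ) := by
          rw [← degree_eq_natDegree h0, this]; exact hh k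
        rw [hdeg] at hM
        have : d + (h k / u).natDegree ≤ M := by exact_mod_cast hM
        exact_mod_cast Nat.le_sub_of_add_le' this
    · push_neg at hk
      rw [(Polynomial.div_eq_zero_iff hu0).2 hk, degree_zero]; exact bot_le
  set M' := max (d - 1) (M - d) with hM'
  have hM'M : M' < M := by
    apply max_lt <;> omega
  have hh' : ∀ k, ((r + qs) k).degree ≤ ((M' : ℕ) : WithBot ℕ) := by
    intro k
    rw [Finsupp.add_apply]
    apply le_trans (degree_add_le _ _)
    apply max_le
    · have := hrk k
      rw [hdeg] at this
      have hle : (r k).degree ≤ ((d - 1 : ℕ) : WithBot ℕ) := by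
        cases hcase : (r k).degree with
        | bot => exact bot_le
        | coe n =>
          rw [hcase, Nat.cast_withBot] at this
          have hn : n < d := WithBot.coe_lt_coe.1 this
          rw [Nat.cast_withBot]
          exact WithBot.coe_le_coe.2 (Nat.le_sub_one_of_lt hn)
      exact le_trans hle (by exact_mod_cast Nat.cast_le.2 (le_max_left _ _))
    · rcases k with _ | k
      · have : qs 0 = 0 := by
          rw [hqs_def]
          apply Finsupp.embDomain_notin_range
          simp [Nat.succ_ne_zero]
        rw [this, degree_zero]; exact bot_le
      · have : qs (k + 1) = q k := by
          rw [hqs_def]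
          exact Finsupp.embDomain_apply_self _ _ _
        rw [this]
        exact le_trans (hqk k) (by exact_mod_cast Nat.cast_le.2 (le_max_right _ _))
  obtain ⟨c, hc1, hc2, hc3⟩ := ih M' hM'M (r + qs) hh'
  refine ⟨c, hc1, fun i => le_trans (hc2 i) (by exact_mod_cast Nat.cast_le.2 (le_of_lt hM'M)), ?_⟩
  rw [hc3]
  -- now show (r + qs).sum φ = h.sum φ
  have hadd := Finsupp.sum_add_index' (f := r) (g := qs) (h := fun i ci => ci * u ^ i)
    (fun i => zero_mul (u ^ i)) (fun i b₁ b₂ => add_mul b₁ b₂ (u ^ i))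
  rw [hadd]
  have h1 : (qs.sum fun i ci => ci * u ^ i) = q.sum fun i ci => ci * u ^ (i + 1) := by
    rw [hqs_def]
    exact Finsupp.sum_embDomain (v := q) (f := ⟨Nat.succ, Nat.succ_injective⟩)
  have h2 := Finsupp.sum_mapRange_index (f := fun x => x % u) (hf := by simp) (g := h)
    (h := fun i ci => ci * u ^ i) (fun i => zero_mul (u ^ i))
  have h3 := Finsupp.sum_mapRange_index (f := fun x => x / u) (hf := by simp) (g := h)
    (h := fun i ci => ci * u ^ (i + 1)) (fun i => zero_mul (u ^ (i + 1)))
  rw [h1, hr_def, hq_def, h2, h3]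
  rw [← Finsupp.sum_add]
  apply Finsupp.sum_congr
  intro i _
  have := EuclideanDomain.div_add_mod (h i) u
  calc (h i) % u * u ^ i + (h i) / u * u ^ (i + 1)
      = (u * ((h i) / u) + (h i) % u) * u ^ i := by ring
    _ = h i * u ^ i := by rw [this]

-- the evaluation map is multiplicative on AddMonoidAlgebra
private lemma eval_mul_eq {F : Type*} [Field F] (u : Polynomial F)
    (a b : AddMonoidAlgebra (Polynomial F) ℕ) :
    ((a * b : AddMonoidAlgebra (Polynomial F) ℕ).coeff.sum fun i ci => ci * u ^ i) =
      (a.coeff.sum fun i ci => ci * u ^ i) * b.coeff.sum fun i ci => ci * u ^ i := by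
  have key : ∀ x : AddMonoidAlgebra (Polynomial F) ℕ,
      AddMonoidAlgebra.liftNC (AddMonoidHom.id (Polynomial F)) (powersHom (Polynomial F) u) x
        = x.coeff.sum fun i ci => ci * u ^ i := by
    intro x
    rw [AddMonoidAlgebra.liftNC]
    erw [AddMonoidHom.comp_apply, Finsupp.liftAddHom_apply]
    apply Finsupp.sum_congr
    intro i _
    simp [powersHom_apply]
  rw [← key, ← key, ← key]
  exact AddMonoidAlgebra.liftNC_mul (RingHom.id (Polynomial F))
    (powersHom (Polynomial F) u) a b (fun {x y} _ => Commute.all _ _)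

private lemma baseDeg_eq_bot_iff {F : Type*} [Field F] (c : ℕ →₀ Polynomial F) :
    baseDeg c = ⊥ ↔ c = 0 := by
  constructor
  · intro hb
    apply Finsupp.ext
    intro i
    rw [Finsupp.coe_zero, Pi.zero_apply]
    by_contra hi
    have hmem : i ∈ c.support := Finsupp.mem_support_iff.2 hi
    have hle := Finset.le_sup (f := fun i => (c i).degree) hmem
    rw [show (c.support.sup fun i => (c i).degree) = baseDeg c from rfl, hb] at hle
    exact hi (degree_eq_bot.1 (le_bot_iff.1 hle))
  · intro h; subst h; simp [baseDeg]

/-- **Subadditivity of the `u`-base degree.** Let `F` be a field and `u` a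
non-constant polynomial.  If `cf`, `cg`, `cfg` are the (unique) `u`-adic
expansions of `f`, `g` and `f * g` respectively (coefficient degrees `< deg u`),
then `deg_u (f * g) ≤ deg_u f + deg_u g`. -/
theorem baseDeg_mul_le (F : Type*) [Field F]
    (u : Polynomial F) (hu : 1 ≤ u.degree)
    (f g : Polynomial F) (cf cg cfg : ℕ →₀ Polynomial F)
    (hcf : ∀ i, (cf i).degree < u.degree)
    (hcg : ∀ i, (cg i).degree < u.degree)
    (hcfg : ∀ i, (cfg i).degree < u.degree)
    (hf : f = cf.sum fun i ci => ci * u ^ i)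
    (hg : g = cg.sum fun i ci => ci * u ^ i)
    (hfg : f * g = cfg.sum fun i ci => ci * u ^ i) :
    baseDeg cfg ≤ baseDeg cf + baseDeg cg := by
  have hu0 : u ≠ 0 := by
    intro h'; rw [h', degree_zero] at hu; exact absurd hu (by simp)
  -- trivial cases
  rcases eq_or_ne cf 0 with h0 | hcf0
  · have hf0 : f = 0 := by rw [hf, h0]; simp
    have : cfg = 0 := expand_zero_unique hu0 cfg hcfg (by rw [← hfg, hf0, zero_mul])
    rw [this, (baseDeg_eq_bot_iff (0 : ℕ →₀ Polynomial F)).2 rfl]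
    exact bot_le
  rcases eq_or_ne cg 0 with h0 | hcg0
  · have hg0 : g = 0 := by rw [hg, h0]; simp
    have : cfg = 0 := expand_zero_unique hu0 cfg hcfg (by rw [← hfg, hg0, mul_zero])
    rw [this, (baseDeg_eq_bot_iff (0 : ℕ →₀ Polynomial F)).2 rfl]
    exact bot_le
  -- main case: baseDeg cf and cg are naturals
  obtain ⟨a, ha⟩ : ∃ a : ℕ, baseDeg cf = (a : WithBot ℕ) := by
    cases hA : baseDeg cf with
    | bot => exact absurd ((baseDeg_eq_bot_iff cf).1 hA) hcf0
    | coe a => exact ⟨a, by rw [Nat.cast_withBot]⟩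
  obtain ⟨b, hb⟩ : ∃ b : ℕ, baseDeg cg = (b : WithBot ℕ) := by
    cases hB : baseDeg cg with
    | bot => exact absurd ((baseDeg_eq_bot_iff cg).1 hB) hcg0
    | coe b => exact ⟨b, by rw [Nat.cast_withBot]⟩
  have hfa : ∀ i, (cf i).degree ≤ (a : WithBot ℕ) := by
    intro i
    by_cases hi : i ∈ cf.support
    · rw [← ha]; exact Finset.le_sup (f := fun i => (cf i).degree) hi
    · rw [Finsupp.notMem_support_iff.1 hi, degree_zero]; exact bot_le
  have hgb : ∀ i, (cg i).degree ≤ (b : WithBot ℕ) := by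
    intro i
    by_cases hi : i ∈ cg.support
    · rw [← hb]; exact Finset.le_sup (f := fun i => (cg i).degree) hi
    · rw [Finsupp.notMem_support_iff.1 hi, degree_zero]; exact bot_le
  -- convolution
  classical
  let cfA : AddMonoidAlgebra (Polynomial F) ℕ := AddMonoidAlgebra.ofCoeff cf
  let cgA : AddMonoidAlgebra (Polynomial F) ℕ := AddMonoidAlgebra.ofCoeff cg
  have hhk : ∀ k, ((cfA * cgA).coeff k).degree ≤ ((a + b : ℕ) : WithBot ℕ) := by
    intro k
    erw [AddMonoidAlgebra.coeff_mul]
    apply le_trans (degree_sum_le _ _)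
    apply Finset.sup_le
    intro i _
    apply le_trans (degree_sum_le _ _)
    apply Finset.sup_le
    intro j _
    simp only []
    split_ifs with hij
    · refine le_trans (degree_mul_le _ _) ?_
      push_cast
      exact add_le_add (hfa i) (hgb j)
    · rw [degree_zero]; exact bot_le
  have hsum : ((cfA * cgA).coeff.sum fun i ci => ci * u ^ i) = f * g := by
    rw [hf, hg]; exact eval_mul_eq u cfA cgA
  obtain ⟨c, hc1, hc2, hc3⟩ := carry hu (a + b) (cfA * cgA).coeff hhk
  have : cfg = c := expand_unique hu0 cfg c hcfg hc1 (by rw [← hfg, hc3, hsum])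
  rw [ha, hb, this]
  apply Finset.sup_le
  intro i _
  calc (c i).degree ≤ ((a + b : ℕ) : WithBot ℕ) := hc2 i
    _ = (a : WithBot ℕ) + b := by push_cast; ring
end

section
/- Let p be prime, m ≥ 2, q = p^m, h(X) = X^{q-1} and g(X) = X^q + X^p + X. For an integer k ≥ 0 write b = k mod m. Then the h-base degree of g(X)^{p^k} equals p^{b+1} if b ≠ m-1, and equals p^{m-1} if b = m-1. -/
open Polynomial

lemma powModAux (p m : ℕ) (hp : 2 ≤ p) (hm : 2 ≤ m) (j : ℕ) :
    p ^ j % (p ^ m - 1) = p ^ (j % m) := by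
  have h4 : 2 ≤ p ^ (m - 1) := by
    calc 2 ≤ p := hp
    _ = p ^ 1 := (pow_one p).symm
    _ ≤ p ^ (m - 1) := Nat.pow_le_pow_right (by omega) (by omega)
  have h3 : p ^ (m - 1) * p = p ^ m := by rw [← pow_succ]; congr 1; omega
  have h2 : p ^ (m - 1) * 2 ≤ p ^ (m - 1) * p := Nat.mul_le_mul_left _ hp
  have hmlt : p ^ (m - 1) < p ^ m - 1 := by omega
  have hlt : p ^ (j % m) < p ^ m - 1 :=
    lt_of_le_of_lt (Nat.pow_le_pow_right (by omega)
      (by have := Nat.mod_lt j (show 0 < m by omega); omega)) hmlt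
  have hmod : p ^ m % (p ^ m - 1) = 1 := by
    rw [Nat.mod_eq_sub_mod (by omega), show p ^ m - (p ^ m - 1) = 1 by omega]
    exact Nat.mod_eq_of_lt (by omega)
  conv_lhs => rw [show j = m * (j / m) + j % m from (Nat.div_add_mod j m).symm]
  rw [pow_add, pow_mul, Nat.mul_mod, Nat.pow_mod, hmod, one_pow,
    Nat.mod_eq_of_lt (by omega : 1 < p ^ m - 1), one_mul,
    Nat.mod_eq_of_lt hlt, Nat.mod_eq_of_lt hlt]

lemma pmPredAux (p m : ℕ) (hp : 2 ≤ p) (hm : 2 ≤ m) : p ^ (m - 1) < p ^ m - 1 := by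
  have h4 : 2 ≤ p ^ (m - 1) := by
    calc 2 ≤ p := hp
    _ = p ^ 1 := (pow_one p).symm
    _ ≤ p ^ (m - 1) := Nat.pow_le_pow_right (by omega) (by omega)
  have h3 : p ^ (m - 1) * p = p ^ m := by rw [← pow_succ]; congr 1; omega
  have h2 : p ^ (m - 1) * 2 ≤ p ^ (m - 1) * p := Nat.mul_le_mul_left _ hp
  omega

lemma extractAux {F : Type*} [Field F] (n : ℕ) (hn : 0 < n) (c : ℕ →₀ Polynomial F)
    (hc : ∀ i, (c i).degree < (n : WithBot ℕ)) (N : ℕ) :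
    (c.sum fun i ci => ci * ((X : Polynomial F) ^ n) ^ i).coeff N
      = (c (N / n)).coeff (N % n) := by
  rw [Finsupp.sum, finset_sum_coeff]
  have hterm : ∀ i, (c i * ((X : Polynomial F) ^ n) ^ i).coeff N
      = if n * i ≤ N then (c i).coeff (N - n * i) else 0 := by
    intro i
    rw [← pow_mul, coeff_mul_X_pow']
  rw [Finset.sum_eq_single (N / n)]
  · rw [hterm, if_pos (by rw [mul_comm]; exact Nat.div_mul_le_self N n)]
    congr 1
    have h1 : n * (N / n) + N % n = N := Nat.div_add_mod N n
    omega
  · intro i _ hne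
    rw [hterm]
    split_ifs with hle
    · have hi : i < N / n := by
        rcases lt_or_ge i (N / n) with h | h
        · exact h
        · exact absurd (le_antisymm ((Nat.le_div_iff_mul_le hn).mpr
            (by rw [mul_comm]; exact hle)) h) hne
      have h5 : (i + 1) * n ≤ N := (Nat.le_div_iff_mul_le hn).mp hi
      have h6 : (i + 1) * n = n * i + n := by ring
      exact coeff_eq_zero_of_degree_lt (lt_of_lt_of_le (hc i)
        (by exact_mod_cast (by omega : n ≤ N - n * i)))
    · rfl
  · intro hns
    rw [Finsupp.notMem_support_iff.mp hns]
    simp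

/-- **`h`-base degree of Frobenius powers of `g` (first instantiation).** Let
`p` be prime, `m ≥ 2`, `q = p^m`, and work over a field `F` of characteristic
`p`.  Let `h(X) = X^{q-1}` and `g(X) = X^q + X^p + X`.  For an integer `k ≥ 0`
write `b = k mod m`.  Then the `h`-base degree of `g^{p^k}` (the maximum of the
coefficient degrees in the unique base-`h` expansion with coefficient degrees
`< deg h`) equals `p^{b+1}` if `b ≠ m - 1`, and equals `p^{m-1}` if
`b = m - 1`. -/
theorem baseDeg_frobenius_power_first (F : Type*) [Field F]
    (p m : ℕ) [Fact p.Prime] [CharP F p] (hm : 2 ≤ m) (k : ℕ)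
    (h g : Polynomial F)
    (hh : h = X ^ (p ^ m - 1))
    (hg : g = X ^ p ^ m + X ^ p + X) :
    (∃ c : ℕ →₀ Polynomial F,
        (∀ i, (c i).degree < h.degree) ∧
        g ^ p ^ k = c.sum fun i ci => ci * h ^ i) ∧
    (∀ c : ℕ →₀ Polynomial F,
        (∀ i, (c i).degree < h.degree) →
        g ^ p ^ k = (c.sum fun i ci => ci * h ^ i) →
        baseDeg c =
          ((if k % m = m - 1 then p ^ (m - 1) else p ^ (k % m + 1) : ℕ) :
            WithBot ℕ)) := by
  have hp2 : 2 ≤ p := (Fact.out : p.Prime).two_le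
  have hm0 : 0 < m := by omega
  have hq4 : 4 ≤ p ^ m := by
    calc (4:ℕ) = 2 ^ 2 := rfl
    _ ≤ p ^ 2 := Nat.pow_le_pow_left hp2 2
    _ ≤ p ^ m := Nat.pow_le_pow_right (by omega) hm
  set n := p ^ m - 1 with hndef
  have hn0 : 0 < n := by omega
  have hdegh : h.degree = (n : WithBot ℕ) := by rw [hh]; exact degree_X_pow n
  haveI : CharP (Polynomial F) p := inferInstance
  set N1 := p ^ (m + k) with hN1def
  set N2 := p ^ (k + 1) with hN2def
  set N3 := p ^ k with hN3def
  have e1 : ((X : Polynomial F) ^ (p ^ m)) ^ (p ^ k) = X ^ N1 := by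
    rw [← pow_mul, ← pow_add]
  have e2 : ((X : Polynomial F) ^ p) ^ (p ^ k) = X ^ N2 := by
    rw [← pow_mul, show p * p ^ k = p ^ (k + 1) from (pow_succ' p k).symm]
  have hfrob : g ^ p ^ k = X ^ N1 + X ^ N2 + X ^ N3 := by
    rw [hg, add_pow_char_pow, add_pow_char_pow, e1, e2]
  have hkm : k % m < m := Nat.mod_lt _ hm0
  have hr1 : N1 % n = p ^ (k % m) := by
    rw [hN1def, hndef, powModAux p m hp2 hm, Nat.add_mod_left]
  have hr3 : N3 % n = p ^ (k % m) := by
    rw [hN3def, hndef, powModAux p m hp2 hm]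
  have hr2 : N2 % n = p ^ ((k % m + 1) % m) := by
    rw [hN2def, hndef, powModAux p m hp2 hm, ← Nat.mod_add_mod]
  have hlt32 : N3 < N2 := Nat.pow_lt_pow_right (by omega) (by omega)
  have hlt21 : N2 < N1 := Nat.pow_lt_pow_right (by omega) (by omega)
  have hfc : ∀ M : ℕ, (g ^ p ^ k).coeff M =
      (if M = N1 then 1 else 0) + (if M = N2 then 1 else 0)
        + (if M = N3 then 1 else 0) := by
    intro M; rw [hfrob]; simp [coeff_X_pow]
  set R := (if k % m = m - 1 then p ^ (m - 1) else p ^ (k % m + 1)) with hRdef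
  have hpm1 : p ^ (m - 1) < n := pmPredAux p m hp2 hm
  have hRn : R < n := by
    rw [hRdef]; split_ifs with hcase
    · exact hpm1
    · exact lt_of_le_of_lt (Nat.pow_le_pow_right (by omega) (by omega)) hpm1
  have hRr1 : N1 % n ≤ R := by
    rw [hr1, hRdef]; split_ifs with hcase
    · rw [hcase]
    · exact Nat.pow_le_pow_right (by omega) (by omega)
  have hRr3 : N3 % n ≤ R := by rw [hr3, ← hr1]; exact hRr1
  have hRr2 : N2 % n ≤ R := by
    rw [hr2, hRdef]; split_ifs with hcase
    · have : (k % m + 1) % m = 0 := by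
        rw [hcase, Nat.sub_add_cancel (by omega), Nat.mod_self]
      rw [this, pow_zero]
      exact Nat.one_le_pow _ _ (by omega)
    · rw [Nat.mod_eq_of_lt (by omega)]
  have hstar : ∃ Ns : ℕ, Ns % n = R ∧ (g ^ p ^ k).coeff Ns = 1 := by
    by_cases hcase : k % m = m - 1
    · refine ⟨N1, ?_, ?_⟩
      · rw [hr1, hRdef, if_pos hcase, hcase]
      · rw [hfc, if_pos rfl, if_neg (ne_of_gt hlt21), if_neg (ne_of_gt (hlt32.trans hlt21))]
        norm_num
    · refine ⟨N2, ?_, ?_⟩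
      · rw [hRdef, if_neg hcase, hr2, Nat.mod_eq_of_lt (by omega)]
      · rw [hfc, if_neg (ne_of_lt hlt21), if_pos rfl, if_neg (ne_of_gt hlt32)]
        norm_num
  constructor
  · refine ⟨Finsupp.single (N1 / n) (X ^ (N1 % n))
      + Finsupp.single (N2 / n) (X ^ (N2 % n))
      + Finsupp.single (N3 / n) (X ^ (N3 % n)), ?_, ?_⟩
    · intro i
      rw [hdegh]
      simp only [Finsupp.add_apply, Finsupp.single_apply]
      have tri : ∀ a b c : Polynomial F, a.degree < (n : WithBot ℕ) →
          b.degree < (n : WithBot ℕ) → c.degree < (n : WithBot ℕ) →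
          (a + b + c).degree < (n : WithBot ℕ) := fun a b c ha hb hc =>
        lt_of_le_of_lt (degree_add_le _ _)
          (max_lt (lt_of_le_of_lt (degree_add_le _ _) (max_lt ha hb)) hc)
      apply tri <;>
      · split_ifs
        · rw [degree_X_pow]
          exact_mod_cast Nat.mod_lt _ hn0
        · simp only [degree_zero]
          exact bot_lt_iff_ne_bot.mpr (by simp)
    · have hz : ∀ a : ℕ, (0 : Polynomial F) * h ^ a = 0 := by simp
      have ha : ∀ (a : ℕ) (x y : Polynomial F),
          (x + y) * h ^ a = x * h ^ a + y * h ^ a := fun a x y => add_mul x y _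
      rw [Finsupp.sum_add_index' (h := fun i ci => ci * h ^ i) hz ha,
        Finsupp.sum_add_index' (h := fun i ci => ci * h ^ i) hz ha,
        Finsupp.sum_single_index (hz _), Finsupp.sum_single_index (hz _),
        Finsupp.sum_single_index (hz _)]
      have hmono : ∀ N : ℕ, (X : Polynomial F) ^ (N % n) * h ^ (N / n) = X ^ N := by
        intro N; rw [hh, ← pow_mul, ← pow_add, Nat.mod_add_div]
      rw [hmono, hmono, hmono, hfrob]
  · intro c hc hsum
    simp only [baseDeg]
    have hc' : ∀ i, (c i).degree < (n : WithBot ℕ) := fun i => hdegh ▸ hc i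
    have hext : ∀ N, (c (N / n)).coeff (N % n) = (g ^ p ^ k).coeff N := by
      intro N; rw [hsum, hh]; exact (extractAux n hn0 c hc' N).symm
    have hcz : ∀ i j, R < j → (c i).coeff j = 0 := by
      intro i j hRj
      rcases lt_or_ge j n with hjn | hjn
      · have h1 : (c i).coeff j = (g ^ p ^ k).coeff (n * i + j) := by
          have := hext (n * i + j)
          rwa [Nat.mul_add_div hn0, Nat.div_eq_of_lt hjn, add_zero,
            Nat.mul_add_mod, Nat.mod_eq_of_lt hjn] at this
        have hmd : (n * i + j) % n = j := by
          rw [Nat.mul_add_mod, Nat.mod_eq_of_lt hjn]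
        have hne : ∀ Nt : ℕ, Nt % n ≤ R → ¬(n * i + j = Nt) := by
          intro Nt hNt e
          rw [← e, hmd] at hNt
          omega
        rw [h1, hfc, if_neg (hne N1 hRr1), if_neg (hne N2 hRr2),
          if_neg (hne N3 hRr3)]
        norm_num
      · exact coeff_eq_zero_of_degree_lt (lt_of_lt_of_le (hc' i)
          (by exact_mod_cast hjn))
    obtain ⟨Ns, hNsR, hNs1⟩ := hstar
    have hcs : (c (Ns / n)).coeff R ≠ 0 := by
      rw [← hNsR, hext Ns, hNs1]; exact one_ne_zero
    have hmem : Ns / n ∈ c.support :=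
      Finsupp.mem_support_iff.mpr (fun e => hcs (by rw [e]; simp))
    apply le_antisymm
    · refine Finset.sup_le fun i _ => ?_
      rw [degree_le_iff_coeff_zero]
      intro j hj
      exact hcz i j (by exact_mod_cast hj)
    · calc ((R : ℕ) : WithBot ℕ) ≤ (c (Ns / n)).degree := le_degree_of_ne_zero hcs
      _ ≤ _ := Finset.le_sup (f := fun i => (c i).degree) hmem
end

section
/- Let p be prime, m ≥ 2, and let H ≤ F_{p^{m+1}}^× be a subgroup of order dividing p^{m+1} - 1, with h(X) = X^{|H|} and g(X) = X^{p^m} - X. For an integer k ≥ 0 write t = k mod (m+1). Then the h-base degree of g(X)^{p^k} equals p^m if t = 0, and equals p^t if 1 ≤ t ≤ m. -/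
open Polynomial

private lemma powModLemma (p m d : ℕ) (hp : 1 < p) (hd : d ∣ p ^ (m + 1) - 1)
    (hd' : p ^ m < d) (n : ℕ) : p ^ n % d = p ^ (n % (m + 1)) := by
  have hd0 : 0 < d := lt_of_le_of_lt (Nat.zero_le _) hd'
  have h1 : (1 : ℕ) ≡ p ^ (m + 1) [MOD d] :=
    (Nat.modEq_iff_dvd' (Nat.one_le_pow _ _ (by omega))).mpr hd
  have hrm : n % (m + 1) ≤ m := by
    have := Nat.mod_lt n (show 0 < m + 1 by omega); omega
  have hlt : p ^ (n % (m + 1)) < d :=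
    lt_of_le_of_lt (Nat.pow_le_pow_right (by omega) hrm) hd'
  have key : p ^ n ≡ p ^ (n % (m + 1)) [MOD d] := by
    conv_lhs => rw [← Nat.div_add_mod n (m + 1), pow_add, pow_mul]
    have := (h1.symm.pow (n / (m + 1))).mul_right (p ^ (n % (m + 1)))
    simpa using this
  calc p ^ n % d = p ^ (n % (m + 1)) % d := key
    _ = p ^ (n % (m + 1)) := Nat.mod_eq_of_lt hlt

private lemma windowCoeff {F : Type*} [Field F] (d : ℕ) (hd0 : 0 < d)
    (c : ℕ →₀ Polynomial F) (hc : ∀ i, (c i).degree < (d : WithBot ℕ))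
    (f : Polynomial F) (hf : f = c.sum fun i ci => ci * (X ^ d) ^ i)
    (n : ℕ) : f.coeff n = (c (n / d)).coeff (n % d) := by
  subst hf
  rw [Finsupp.sum, finset_sum_coeff]
  rw [Finset.sum_eq_single (n / d)]
  · rw [← pow_mul, coeff_mul_X_pow']
    have h1 : d * (n / d) + n % d = n := Nat.div_add_mod n d
    rw [if_pos (by omega)]
    congr 1
    omega
  · intro i _ hi
    rw [← pow_mul, coeff_mul_X_pow']
    split_ifs with hle
    · apply coeff_eq_zero_of_degree_lt
      refine lt_of_lt_of_le (hc i) ?_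
      have hile : i ≤ n / d := (Nat.le_div_iff_mul_le hd0).mpr
        (by rw [mul_comm]; exact hle)
      have h2 : d * (i + 1) ≤ n := by
        rw [mul_comm]
        exact (Nat.le_div_iff_mul_le hd0).mp (by omega)
      have h3 : d ≤ n - d * i := by
        rw [mul_add, mul_one] at h2; omega
      exact_mod_cast h3
    · rfl
  · intro hns
    rw [Finsupp.notMem_support_iff.mp hns, zero_mul, coeff_zero]

/-- **`h`-base degree of Frobenius powers of `g` (second instantiation).** Let
`p` be prime, `m ≥ 2`, and let `H ≤ F_{p^{m+1}}ˣ` be a multiplicative subgroup,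
so that its order `d = |H|` divides `p^{m+1} - 1` (and, as in the construction,
`d > p^m`, so the coefficient degrees below are admissible).  Work over a field
`F` of characteristic `p`, and let `h(X) = X^d` and `g(X) = X^{p^m} - X`.  For
an integer `k ≥ 0` write `t = k mod (m+1)`.  Then the `h`-base degree of
`g^{p^k}` (the maximum of the coefficient degrees in the unique base-`h`
expansion with coefficient degrees `< deg h = d`) equals `p^m` if `t = 0`, and
equals `p^t` if `1 ≤ t ≤ m`. -/
theorem baseDeg_frobenius_power_second (F : Type*) [Field F]
    (p m : ℕ) [Fact p.Prime] [CharP F p] (hm : 2 ≤ m) (k : ℕ)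
    (d : ℕ) (hd : d ∣ p ^ (m + 1) - 1) (hd' : p ^ m < d)
    (h g : Polynomial F)
    (hh : h = X ^ d)
    (hg : g = X ^ p ^ m - X) :
    (∃ c : ℕ →₀ Polynomial F,
        (∀ i, (c i).degree < h.degree) ∧
        g ^ p ^ k = c.sum fun i ci => ci * h ^ i) ∧
    (∀ c : ℕ →₀ Polynomial F,
        (∀ i, (c i).degree < h.degree) →
        g ^ p ^ k = (c.sum fun i ci => ci * h ^ i) →
        baseDeg c =
          ((if k % (m + 1) = 0 then p ^ m else p ^ (k % (m + 1)) : ℕ) :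
            WithBot ℕ)) := by
  have hp : p.Prime := Fact.out
  have hp1 : 1 < p := hp.one_lt
  have hd0 : 0 < d := lt_of_le_of_lt (Nat.zero_le _) hd'
  subst hh hg
  set t := k % (m + 1) with ht
  have htm : t ≤ m := by
    have := Nat.mod_lt k (show 0 < m + 1 by omega); omega
  -- the polynomial identity
  have hA : ((X : Polynomial F) ^ p ^ m - X) ^ p ^ k
      = X ^ p ^ (m + k) - X ^ p ^ k := by
    rw [sub_pow_char_pow, ← pow_mul, ← pow_add]
  set A := p ^ (m + k) with hAdef
  set B := p ^ k with hBdef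
  have hAB : B < A := Nat.pow_lt_pow_right hp1 (by omega)
  set a := A % d with hadef
  set b := B % d with hbdef
  have ha : a = p ^ ((m + k) % (m + 1)) := powModLemma p m d hp1 hd hd' (m + k)
  have hb : b = p ^ t := powModLemma p m d hp1 hd hd' k
  have hmk : (m + k) % (m + 1) = if t = 0 then m else t - 1 := by
    have h1 : (m + k) % (m + 1) = (m + t) % (m + 1) := by
      rw [Nat.add_mod, Nat.mod_eq_of_lt (show m < m + 1 by omega), ← ht]
    rw [h1]
    split_ifs with h0
    · rw [h0, add_zero, Nat.mod_eq_of_lt (by omega)]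
    · have he : m + t = (t - 1) + (m + 1) := by omega
      rw [he, Nat.add_mod_right, Nat.mod_eq_of_lt (by omega)]
  have hane : a ≠ b := by
    rw [ha, hb, hmk]
    split_ifs with h0
    · rw [h0]
      intro hcon
      have := Nat.pow_right_injective (hp.two_le) hcon
      omega
    · intro hcon
      have := Nat.pow_right_injective (hp.two_le) hcon
      omega
  have had : a < d := Nat.mod_lt _ hd0
  have hbd : b < d := Nat.mod_lt _ hd0
  set M := max a b with hM
  have haM : a ≤ M := le_max_left _ _
  have hbM : b ≤ M := le_max_right _ _
  have hMd : M < d := by omega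
  have hMval : M = (if t = 0 then p ^ m else p ^ t) := by
    rw [hM, ha, hb, hmk]
    split_ifs with h0
    · rw [h0, pow_zero]
      exact max_eq_left (Nat.one_le_pow _ _ (by omega))
    · exact max_eq_right (Nat.pow_le_pow_right (by omega) (by omega))
  have hdegh : ((X : Polynomial F) ^ d).degree = (d : WithBot ℕ) := degree_X_pow d
  have hqa : d * (A / d) + a = A := Nat.div_add_mod A d
  have hqb : d * (B / d) + b = B := Nat.div_add_mod B d
  constructor
  · -- existence
    refine ⟨Finsupp.single (A / d) (X ^ a) + Finsupp.single (B / d) (-(X ^ b)), ?_, ?_⟩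
    · intro i
      rw [hdegh, Finsupp.add_apply, Finsupp.single_apply, Finsupp.single_apply]
      refine lt_of_le_of_lt (degree_add_le _ _) ?_
      rw [max_lt_iff]
      constructor
      · split_ifs
        · rw [degree_X_pow]; exact_mod_cast had
        · rw [degree_zero]; exact bot_lt_iff_ne_bot.mpr (by simp)
      · split_ifs
        · rw [degree_neg, degree_X_pow]; exact_mod_cast hbd
        · rw [degree_zero]; exact bot_lt_iff_ne_bot.mpr (by simp)
    · rw [hA]
      rw [Finsupp.sum_add_index' (fun i => by rw [zero_mul])
        (fun i x y => by rw [add_mul])]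
      rw [Finsupp.sum_single_index (by rw [zero_mul]),
        Finsupp.sum_single_index (by rw [zero_mul])]
      rw [← pow_mul, ← pow_mul, ← pow_add, neg_mul, ← pow_add,
        show a + d * (A / d) = A by omega, show b + d * (B / d) = B by omega,
        sub_eq_add_neg]
  · -- uniqueness
    intro c hcdeg hcsum
    have hcdeg' : ∀ i, (c i).degree < (d : WithBot ℕ) := by
      intro i
      have := hcdeg i
      rwa [hdegh] at this
    have hw : ∀ n, ((X : Polynomial F) ^ A - X ^ B).coeff n
        = (c (n / d)).coeff (n % d) := by
      intro n
      exact windowCoeff d hd0 c hcdeg' _ (by rw [← hA, ← hcsum]) n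
    have hcw : ∀ i j, j < d → (c i).coeff j
        = if A = d * i + j then 1 else if B = d * i + j then (-1 : F) else 0 := by
      intro i j hj
      have h1 := hw (d * i + j)
      rw [Nat.mul_add_div hd0, Nat.div_eq_of_lt hj, add_zero,
        Nat.mul_add_mod, Nat.mod_eq_of_lt hj] at h1
      rw [← h1, coeff_sub, coeff_X_pow, coeff_X_pow]
      split_ifs with h2 h3 h3 <;> first | (exfalso; omega) | simp
    have hdle : ∀ i, (c i).degree ≤ (M : WithBot ℕ) := by
      intro i
      rw [degree_le_iff_coeff_zero]
      intro j hj
      have hjM : M < j := by exact_mod_cast hj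
      by_cases hjd : j < d
      · rw [hcw i j hjd]
        split_ifs with h1 h2
        · exfalso
          have : A % d = j := by rw [h1, Nat.mul_add_mod, Nat.mod_eq_of_lt hjd]
          omega
        · exfalso
          have : B % d = j := by rw [h2, Nat.mul_add_mod, Nat.mod_eq_of_lt hjd]
          omega
        · rfl
      · exact coeff_eq_zero_of_degree_lt (lt_of_lt_of_le (hcdeg' i)
          (by exact_mod_cast Nat.not_lt.mp hjd))
    -- find the block realizing M
    obtain ⟨iM, hcoeffM⟩ : ∃ iM, (c iM).coeff M ≠ 0 := by
      rcases lt_or_gt_of_ne hane with hab | hab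
      · -- M = b
        refine ⟨B / d, ?_⟩
        have hMb : M = b := by omega
        rw [hMb, hcw (B / d) b hbd, show d * (B / d) + b = B from hqb]
        rw [if_neg (by omega), if_pos rfl]
        exact neg_ne_zero.mpr one_ne_zero
      · -- M = a
        refine ⟨A / d, ?_⟩
        have hMa : M = a := by omega
        rw [hMa, hcw (A / d) a had, show d * (A / d) + a = A from hqa]
        rw [if_pos rfl]
        exact one_ne_zero
    have hmem : iM ∈ c.support := by
      rw [Finsupp.mem_support_iff]
      intro h0
      rw [h0, coeff_zero] at hcoeffM
      exact hcoeffM rfl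
    have hbd1 : baseDeg c = (M : WithBot ℕ) := by
      unfold baseDeg
      apply le_antisymm
      · exact Finset.sup_le fun i _ => hdle i
      · calc (M : WithBot ℕ) ≤ (c iM).degree := le_degree_of_ne_zero hcoeffM
          _ ≤ c.support.sup (fun i => (c i).degree) := Finset.le_sup (f := fun i => (c i).degree) hmem
    rw [hbd1, hMval]
end
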